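/- arXiv:1507.03004 — 3 statements merged into one kernel-verified Lean document; each statement's English description precedes it below -/
import Mathlib

section
/- Let α ∈ (−1/2, 1/2) with α ≠ 0 and κ ≥ 0 an integer. For k ≥ κ+1 define b*_k = ((k^(α+1) − (k−1)^(α+1))/(α+1))^(1/α). Then for every k ≥ κ+1, b*_k ∈ (k−1, k), and for every c ∈ ℝ the integral ∫_{k−1}^{k} (y^α − c)² dy is minimized over c by c = (b*_k)^α; consequently among all sequences b = {b_k} with b_k ∈ [k−1,k]\{0}, the sum J(α,κ,b) = Σ_{k=κ+1}^∞ ∫_{k−1}^k (y^α − b_k^α)² dy is minimized by b* = {b*_k}. -/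
open Real Set

namespace OptimalDisc

open MeasureTheory

lemma mvt_mean (α : ℝ) (hα1 : -1 < α) (a : ℝ) (ha : 0 ≤ a) :
    ∃ ξ ∈ Set.Ioo a (a + 1), ξ ^ α = ((a + 1) ^ (α + 1) - a ^ (α + 1)) / (α + 1) := by
  have hab : a < a + 1 := by linarith
  have hcont : ContinuousOn (fun y : ℝ => y ^ (α + 1) / (α + 1)) (Set.Icc a (a + 1)) := by
    intro x _
    exact ((Real.continuousAt_rpow_const x (α + 1) (Or.inr (by linarith))).div_const
      (α + 1)).continuousWithinAt
  have hderiv : ∀ x ∈ Set.Ioo a (a + 1),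
      HasDerivAt (fun y : ℝ => y ^ (α + 1) / (α + 1)) (x ^ α) x := by
    intro x hx
    have hx0 : x ≠ 0 := by have := hx.1; intro h; rw [h] at this; linarith
    have h := (Real.hasDerivAt_rpow_const (p := α + 1) (Or.inl hx0)).div_const (α + 1)
    have hα1' : α + 1 ≠ 0 := by linarith
    rw [show x ^ α = (α + 1) * x ^ (α + 1 - 1) / (α + 1) by
      rw [add_sub_cancel_right, mul_div_cancel_left₀ _ hα1']]
    exact h
  obtain ⟨ξ, hξ, hslope⟩ := exists_hasDerivAt_eq_slope
    (fun y : ℝ => y ^ (α + 1) / (α + 1)) (fun x => x ^ α) hab hcont hderiv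
  refine ⟨ξ, hξ, ?_⟩
  rw [hslope]
  have : a + 1 - a = 1 := by ring
  rw [this, div_one, div_sub_div_same]

lemma mvt_slope (p : ℝ) (a : ℝ) (ha : 0 < a) :
    ∃ ξ ∈ Set.Ioo a (a + 1), p * ξ ^ (p - 1) = (a + 1) ^ p - a ^ p := by
  have hab : a < a + 1 := by linarith
  have hcont : ContinuousOn (fun y : ℝ => y ^ p) (Set.Icc a (a + 1)) := by
    intro x hx
    have hx0 : x ≠ 0 := by have := hx.1; intro h; rw [h] at this; linarith
    exact (Real.continuousAt_rpow_const x p (Or.inl hx0)).continuousWithinAt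
  have hderiv : ∀ x ∈ Set.Ioo a (a + 1),
      HasDerivAt (fun y : ℝ => y ^ p) (p * x ^ (p - 1)) x := by
    intro x hx
    have hx0 : x ≠ 0 := by have := hx.1; intro h; rw [h] at this; linarith
    exact Real.hasDerivAt_rpow_const (Or.inl hx0)
  obtain ⟨ξ, hξ, hslope⟩ := exists_hasDerivAt_eq_slope
    (fun y : ℝ => y ^ p) (fun x => p * x ^ (p - 1)) hab hcont hderiv
  refine ⟨ξ, hξ, ?_⟩
  rw [hslope]
  have : a + 1 - a = 1 := by ring
  rw [this, div_one]

lemma sq_expand_pt (α : ℝ) (hα0 : α ≠ 0) (c y : ℝ) (hy : 0 ≤ y) :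
    (y ^ α - c) ^ 2 = y ^ (2 * α) - 2 * c * y ^ α + c ^ 2 := by
  have h : y ^ (2 * α) = y ^ α * y ^ α := by
    rw [two_mul,
      Real.rpow_add' hy (by simpa [two_mul] using mul_ne_zero (two_ne_zero (α := ℝ)) hα0)]
  rw [h]; ring

lemma integrable_sq (α : ℝ) (hα : α ∈ Set.Ioo (-(1/2) : ℝ) (1/2)) (hα0 : α ≠ 0)
    (a : ℝ) (ha : 0 ≤ a) (c : ℝ) :
    IntervalIntegrable (fun y => (y ^ α - c) ^ 2) volume a (a + 1) := by
  have h2 : IntervalIntegrable (fun y : ℝ => y ^ (2 * α)) volume a (a + 1) :=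
    intervalIntegral.intervalIntegrable_rpow' (by have := hα.1; linarith)
  have h1 : IntervalIntegrable (fun y : ℝ => y ^ α) volume a (a + 1) :=
    intervalIntegral.intervalIntegrable_rpow' (by have := hα.1; linarith)
  refine ((h2.sub (h1.const_mul (2 * c))).add (intervalIntegrable_const (c := c ^ 2))).congr
    (g := fun y => (y ^ α - c) ^ 2) ?_
  intro y hy
  rw [Set.uIoc_of_le (by linarith : a ≤ a + 1)] at hy
  have hy0 : 0 ≤ y := le_trans ha hy.1.le
  show y ^ (2 * α) - 2 * c * y ^ α + c ^ 2 = (y ^ α - c) ^ 2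
  rw [sq_expand_pt α hα0 c y hy0]

lemma integral_sq_expand (α : ℝ) (hα : α ∈ Set.Ioo (-(1/2) : ℝ) (1/2)) (hα0 : α ≠ 0)
    (a : ℝ) (ha : 0 ≤ a) (c : ℝ) :
    ∫ y in a..(a + 1), (y ^ α - c) ^ 2 =
      (∫ y in a..(a + 1), y ^ (2 * α)) - 2 * c * (∫ y in a..(a + 1), y ^ α) + c ^ 2 := by
  have h2 : IntervalIntegrable (fun y : ℝ => y ^ (2 * α)) volume a (a + 1) :=
    intervalIntegral.intervalIntegrable_rpow' (by have := hα.1; linarith)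
  have h1 : IntervalIntegrable (fun y : ℝ => y ^ α) volume a (a + 1) :=
    intervalIntegral.intervalIntegrable_rpow' (by have := hα.1; linarith)
  have hcongr : Set.EqOn (fun y : ℝ => (y ^ α - c) ^ 2)
      (fun y : ℝ => y ^ (2 * α) - 2 * c * y ^ α + c ^ 2) (Set.uIcc a (a + 1)) := by
    intro y hy
    rw [Set.uIcc_of_le (by linarith : a ≤ a + 1)] at hy
    exact sq_expand_pt α hα0 c y (le_trans ha hy.1)
  rw [intervalIntegral.integral_congr hcongr,
    intervalIntegral.integral_add (h2.sub (h1.const_mul (2 * c))) intervalIntegrable_const,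
    intervalIntegral.integral_sub h2 (h1.const_mul (2 * c)),
    intervalIntegral.integral_const_mul, intervalIntegral.integral_const]
  rw [add_sub_cancel_left, one_smul]

lemma key_min (α : ℝ) (hα : α ∈ Set.Ioo (-(1/2) : ℝ) (1/2)) (hα0 : α ≠ 0)
    (a : ℝ) (ha : 0 ≤ a) (c : ℝ) :
    ∫ y in a..(a + 1), (y ^ α - ((a + 1) ^ (α + 1) - a ^ (α + 1)) / (α + 1)) ^ 2 ≤
      ∫ y in a..(a + 1), (y ^ α - c) ^ 2 := by
  set m : ℝ := ((a + 1) ^ (α + 1) - a ^ (α + 1)) / (α + 1) with hm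
  have hmean : (∫ y in a..(a + 1), y ^ α) = m := by
    rw [integral_rpow (Or.inl (by have := hα.1; linarith))]
  rw [integral_sq_expand α hα hα0 a ha c, integral_sq_expand α hα hα0 a ha m, hmean]
  nlinarith [sq_nonneg (c - m)]

lemma sq_bound (α : ℝ) (a x z : ℝ) (ha : 0 < a) (hx : x ∈ Set.Icc a (a + 1))
    (hz : z ∈ Set.Icc a (a + 1)) :
    (x ^ α - z ^ α) ^ 2 ≤ ((a + 1) ^ α - a ^ α) ^ 2 := by
  have hx0 : 0 < x := lt_of_lt_of_le ha hx.1
  have hz0 : 0 < z := lt_of_lt_of_le ha hz.1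
  rcases le_or_gt 0 α with hpos | hneg
  · have h1 : a ^ α ≤ x ^ α := Real.rpow_le_rpow ha.le hx.1 hpos
    have h2 : x ^ α ≤ (a + 1) ^ α := Real.rpow_le_rpow hx0.le hx.2 hpos
    have h3 : a ^ α ≤ z ^ α := Real.rpow_le_rpow ha.le hz.1 hpos
    have h4 : z ^ α ≤ (a + 1) ^ α := Real.rpow_le_rpow hz0.le hz.2 hpos
    nlinarith [mul_nonneg (by linarith : (0:ℝ) ≤ ((a+1)^α - x^α) + (z^α - a^α))
      (by linarith : (0:ℝ) ≤ ((a+1)^α - z^α) + (x^α - a^α))]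
  · have h1 : x ^ α ≤ a ^ α := Real.rpow_le_rpow_of_nonpos ha hx.1 hneg.le
    have h2 : (a + 1) ^ α ≤ x ^ α := Real.rpow_le_rpow_of_nonpos hx0 hx.2 hneg.le
    have h3 : z ^ α ≤ a ^ α := Real.rpow_le_rpow_of_nonpos ha hz.1 hneg.le
    have h4 : (a + 1) ^ α ≤ z ^ α := Real.rpow_le_rpow_of_nonpos hz0 hz.2 hneg.le
    nlinarith [mul_nonneg (by linarith : (0:ℝ) ≤ (a^α - x^α) + (z^α - (a+1)^α))
      (by linarith : (0:ℝ) ≤ (a^α - z^α) + (x^α - (a+1)^α))]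

lemma tail_bound (α : ℝ) (hα : α ∈ Set.Ioo (-(1/2) : ℝ) (1/2)) (hα0 : α ≠ 0)
    (a z : ℝ) (ha : 1 ≤ a) (hz : z ∈ Set.Icc a (a + 1)) :
    ∫ y in a..(a + 1), (y ^ α - z ^ α) ^ 2 ≤ α ^ 2 * a ^ (2 * α - 2) := by
  have ha0 : (0:ℝ) < a := lt_of_lt_of_le one_pos ha
  have h1 : ∫ y in a..(a + 1), (y ^ α - z ^ α) ^ 2 ≤
      ∫ _y in a..(a + 1), ((a + 1) ^ α - a ^ α) ^ 2 := by
    apply intervalIntegral.integral_mono_on (by linarith)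
      (integrable_sq α hα hα0 a ha0.le _) intervalIntegrable_const
    intro x hx
    exact sq_bound α a x z ha0 hx hz
  have h2 : (∫ _y in a..(a + 1), ((a + 1) ^ α - a ^ α) ^ 2) =
      ((a + 1) ^ α - a ^ α) ^ 2 := by
    rw [intervalIntegral.integral_const, add_sub_cancel_left, one_smul]
  obtain ⟨ξ, hξ, hslope⟩ := mvt_slope α a ha0
  have hξ0 : 0 < ξ := ha0.trans hξ.1
  have h3 : ((a + 1) ^ α - a ^ α) ^ 2 = α ^ 2 * ξ ^ (2 * α - 2) := by
    rw [← hslope, mul_pow]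
    congr 1
    rw [sq, ← Real.rpow_add hξ0, show α - 1 + (α - 1) = 2 * α - 2 by ring]
  have h4 : ξ ^ (2 * α - 2) ≤ a ^ (2 * α - 2) :=
    Real.rpow_le_rpow_of_nonpos ha0 hξ.1.le (by have := hα.2; linarith)
  calc ∫ y in a..(a + 1), (y ^ α - z ^ α) ^ 2 ≤ ((a + 1) ^ α - a ^ α) ^ 2 := h2 ▸ h1
    _ = α ^ 2 * ξ ^ (2 * α - 2) := h3
    _ ≤ α ^ 2 * a ^ (2 * α - 2) := mul_le_mul_of_nonneg_left h4 (sq_nonneg α)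

end OptimalDisc

open OptimalDisc

theorem optimal_discretization (α : ℝ) (hα : α ∈ Set.Ioo (-(1/2) : ℝ) (1/2)) (hα0 : α ≠ 0)
    (κ : ℕ) (bstar : ℕ → ℝ)
    (hbstar : ∀ k : ℕ, κ + 1 ≤ k →
      bstar k = ((((k : ℝ) ^ (α + 1) - ((k : ℝ) - 1) ^ (α + 1)) / (α + 1)) ^ (1 / α))) :
    (∀ k : ℕ, κ + 1 ≤ k → bstar k ∈ Set.Ioo ((k : ℝ) - 1) (k : ℝ)) ∧
    (∀ k : ℕ, κ + 1 ≤ k → ∀ c : ℝ,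
      (∫ y in ((k : ℝ) - 1)..(k : ℝ), (y ^ α - (bstar k) ^ α) ^ 2) ≤
        ∫ y in ((k : ℝ) - 1)..(k : ℝ), (y ^ α - c) ^ 2) ∧
    (∀ b : ℕ → ℝ,
      (∀ k : ℕ, κ + 1 ≤ k → b k ∈ Set.Icc ((k : ℝ) - 1) (k : ℝ) ∧ b k ≠ 0) →
      (∑' i : ℕ, ∫ y in (((κ + 1 + i : ℕ) : ℝ) - 1)..((κ + 1 + i : ℕ) : ℝ),
          (y ^ α - (bstar (κ + 1 + i)) ^ α) ^ 2) ≤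
        ∑' i : ℕ, ∫ y in (((κ + 1 + i : ℕ) : ℝ) - 1)..((κ + 1 + i : ℕ) : ℝ),
          (y ^ α - (b (κ + 1 + i)) ^ α) ^ 2) := by
  have hα1 : -1 < α := by have := hα.1; linarith
  have hmain : ∀ k : ℕ, κ + 1 ≤ k → bstar k ∈ Set.Ioo ((k : ℝ) - 1) (k : ℝ) ∧
      (bstar k) ^ α = ((k : ℝ) ^ (α + 1) - ((k : ℝ) - 1) ^ (α + 1)) / (α + 1) := by
    intro k hk
    have hk1 : (1:ℝ) ≤ (k:ℝ) := by
      have : 1 ≤ k := by omega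
      exact_mod_cast this
    have ha : (0:ℝ) ≤ (k:ℝ) - 1 := by linarith
    obtain ⟨ξ, hξ, hξeq⟩ := mvt_mean α hα1 ((k:ℝ) - 1) ha
    have hae : (k:ℝ) - 1 + 1 = (k:ℝ) := by ring
    rw [hae] at hξ hξeq
    have hξ0 : 0 < ξ := lt_of_le_of_lt ha hξ.1
    have hb : bstar k = ξ := by
      rw [hbstar k hk, ← hξeq, one_div, ← Real.rpow_mul hξ0.le,
        mul_inv_cancel₀ hα0, Real.rpow_one]
    constructor
    · rw [hb]; exact hξ
    · rw [hb, hξeq]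
  have part2 : ∀ k : ℕ, κ + 1 ≤ k → ∀ c : ℝ,
      (∫ y in ((k : ℝ) - 1)..(k : ℝ), (y ^ α - (bstar k) ^ α) ^ 2) ≤
        ∫ y in ((k : ℝ) - 1)..(k : ℝ), (y ^ α - c) ^ 2 := by
    intro k hk c
    have hk1 : (1:ℝ) ≤ (k:ℝ) := by
      have : 1 ≤ k := by omega
      exact_mod_cast this
    have ha : (0:ℝ) ≤ (k:ℝ) - 1 := by linarith
    have h := key_min α hα hα0 ((k:ℝ) - 1) ha c
    rw [show (k:ℝ) - 1 + 1 = (k:ℝ) from by ring] at h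
    rwa [← (hmain k hk).2] at h
  refine ⟨fun k hk => (hmain k hk).1, part2, ?_⟩
  intro b hb
  have hnonneg : ∀ i : ℕ,
      0 ≤ ∫ y in (((κ + 1 + i : ℕ) : ℝ) - 1)..((κ + 1 + i : ℕ) : ℝ),
        (y ^ α - (b (κ + 1 + i)) ^ α) ^ 2 := by
    intro i
    have hab : (((κ + 1 + i : ℕ) : ℝ)) - 1 ≤ ((κ + 1 + i : ℕ) : ℝ) := by linarith
    exact intervalIntegral.integral_nonneg hab (fun y _ => sq_nonneg _)
  have hle : ∀ i : ℕ,
      (∫ y in (((κ + 1 + i : ℕ) : ℝ) - 1)..((κ + 1 + i : ℕ) : ℝ),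
        (y ^ α - (bstar (κ + 1 + i)) ^ α) ^ 2) ≤
      ∫ y in (((κ + 1 + i : ℕ) : ℝ) - 1)..((κ + 1 + i : ℕ) : ℝ),
        (y ^ α - (b (κ + 1 + i)) ^ α) ^ 2 :=
    fun i => part2 (κ + 1 + i) (by omega) ((b (κ + 1 + i)) ^ α)
  have hsumg : Summable (fun i : ℕ =>
      ∫ y in (((κ + 1 + i : ℕ) : ℝ) - 1)..((κ + 1 + i : ℕ) : ℝ),
        (y ^ α - (b (κ + 1 + i)) ^ α) ^ 2) := by
    apply (summable_nat_add_iff 1).mp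
    have hbound : ∀ i : ℕ,
        (∫ y in (((κ + 1 + (i + 1) : ℕ) : ℝ) - 1)..((κ + 1 + (i + 1) : ℕ) : ℝ),
          (y ^ α - (b (κ + 1 + (i + 1))) ^ α) ^ 2) ≤
        α ^ 2 * ((i : ℝ) + 1) ^ (2 * α - 2) := by
      intro i
      set k : ℕ := κ + 1 + (i + 1) with hkdef
      have hcast : ((k : ℕ) : ℝ) = (κ : ℝ) + (i : ℝ) + 2 := by rw [hkdef]; push_cast; ring
      have h1a : (1:ℝ) ≤ (k:ℝ) - 1 := by
        rw [hcast]
        have h1 := Nat.cast_nonneg (α := ℝ) κ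
        have h2 := Nat.cast_nonneg (α := ℝ) i
        linarith
      have hae : (k:ℝ) - 1 + 1 = (k:ℝ) := by ring
      have hbk : b k ∈ Set.Icc ((k:ℝ) - 1) ((k:ℝ) - 1 + 1) := by
        rw [hae]; exact (hb k (by omega)).1
      have ht := tail_bound α hα hα0 ((k:ℝ) - 1) (b k) h1a hbk
      rw [hae] at ht
      refine le_trans ht ?_
      have hia : ((i:ℝ) + 1) ≤ (k:ℝ) - 1 := by
        rw [hcast]; have := Nat.cast_nonneg (α := ℝ) κ; linarith
      have := Real.rpow_le_rpow_of_nonpos (by positivity : (0:ℝ) < (i:ℝ) + 1) hia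
        (by have := hα.2; linarith : 2 * α - 2 ≤ 0)
      exact mul_le_mul_of_nonneg_left this (sq_nonneg α)
    refine Summable.of_nonneg_of_le (fun i => hnonneg (i + 1)) hbound ?_
    have hs : Summable (fun n : ℕ => (n : ℝ) ^ (2 * α - 2)) :=
      Real.summable_nat_rpow.mpr (by have := hα.2; linarith)
    have hs1 : Summable (fun n : ℕ => ((n + 1 : ℕ) : ℝ) ^ (2 * α - 2)) :=
      (summable_nat_add_iff 1).mpr hs
    refine (hs1.mul_left (α ^ 2)).congr fun n => ?_
    push_cast
    ring_nf
  have hsumf : Summable (fun i : ℕ =>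
      ∫ y in (((κ + 1 + i : ℕ) : ℝ) - 1)..((κ + 1 + i : ℕ) : ℝ),
        (y ^ α - (bstar (κ + 1 + i)) ^ α) ^ 2) := by
    refine Summable.of_nonneg_of_le (fun i => ?_) hle hsumg
    have hab : (((κ + 1 + i : ℕ) : ℝ)) - 1 ≤ ((κ + 1 + i : ℕ) : ℝ) := by linarith
    exact intervalIntegral.integral_nonneg hab (fun y _ => sq_nonneg _)
  exact Summable.tsum_le_tsum hle hsumf hsumg
end

section
/- Let g satisfy g(x) = x^α L_g(x) on (0,1] with α ∈ (−1/2,1/2)\{0} and L_g slowly varying at 0, continuously differentiable and bounded away from 0. For ε ∈ (0,1] define the truncated kernel g_ε(x) = g(ε) for x ∈ (0,ε], g_ε(x) = g(x) for x > ε. Then ∫_0^ε (g(s) − g(ε))² ds ∼ (1/(2α+1) − 2/(α+1) + 1) ε^{2α+1} L_g(ε)² as ε ↓ 0. -/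
/-!
Substituting `s = ε y` gives
`∫₀^ε (g s - g ε)² ds = ε^(2α+1) L(ε)² ∫₀¹ (y^α L(ε y) / L(ε) - 1)² dy`.
By slow variation the last integrand tends to `(y^α - 1)²`, whose integral is the constant
`1/(2α+1) - 2/(α+1) + 1`, and dominated convergence applies thanks to Potter's bound
`L(ε y) / L(ε) ≤ e^δ y^(-δ)`, with `δ` so small that `y^(2(α-δ))` stays integrable. Potter's bound
follows from the uniform convergence theorem for the additive form `u ↦ log L(e^(-u))`, which
Egorov's theorem provides.
-/

open Real Filter Set MeasureTheory Topology Interval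

section Additive

variable {h : ℝ → ℝ}

lemma exists_volume_le_eventually_forall_abs_sub_lt (hm : Measurable h)
    (hh : ∀ s, Tendsto (fun u => h (u + s) - h u) atTop (𝓝 0))
    {v : ℕ → ℝ} (hv : Tendsto v atTop atTop) (K : ℝ) {ε η : ℝ} (hε : 0 < ε) (hη : 0 < η) :
    ∃ t, volume t ≤ ENNReal.ofReal η ∧
      ∀ᶠ n in atTop, ∀ a ∈ Icc 0 K \ t, |h (v n + a) - h (v n)| < ε := by
  obtain ⟨t, -, -, ht, hunif⟩ := tendstoUniformlyOn_of_ae_tendsto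
    (f := fun n a => h (v n + a) - h (v n)) (g := fun _ => 0) (μ := volume)
    (fun n => ((hm.comp (measurable_const_add _)).sub_const _).stronglyMeasurable)
    stronglyMeasurable_const measurableSet_Icc (by simp [Real.volume_Icc])
    (ae_of_all _ fun a _ => (hh a).comp hv) hη
  refine ⟨t, ht, ?_⟩
  filter_upwards [Metric.tendstoUniformlyOn_iff.mp hunif ε hε] with n hn a ha
  simpa [Real.dist_eq, abs_sub_comm] using hn a ha

/-- Uniform convergence theorem. Egorov's theorem makes the convergence uniform off sets of small
measure; two such sets, one translated by `s n`, cannot cover an interval of length `T`. -/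
theorem eventually_forall_abs_sub_lt (hm : Measurable h)
    (hh : ∀ s, Tendsto (fun u => h (u + s) - h u) atTop (𝓝 0)) {T ε : ℝ} (hT : 0 < T)
    (hε : 0 < ε) : ∀ᶠ u in atTop, ∀ s ∈ Icc 0 T, |h (u + s) - h u| < ε := by
  by_contra hcon
  obtain ⟨u, hu, hbad⟩ := exists_seq_forall_of_frequently (not_eventually.mp hcon)
  push Not at hbad
  choose s hs hbad using hbad
  have hw : Tendsto (fun n => u n + s n) atTop atTop :=
    tendsto_atTop_mono (fun n => le_add_of_nonneg_right (hs n).1) hu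
  obtain ⟨t₁, ht₁, hu₁⟩ := exists_volume_le_eventually_forall_abs_sub_lt hm hh hu (2 * T)
    (half_pos hε) (by positivity : 0 < T / 4)
  obtain ⟨t₂, ht₂, hw₂⟩ := exists_volume_le_eventually_forall_abs_sub_lt hm hh hw (2 * T)
    (half_pos hε) (by positivity : 0 < T / 4)
  obtain ⟨n, hn₁, hn₂⟩ := (hu₁.and hw₂).exists
  obtain ⟨a, ha, hat⟩ : ∃ a ∈ Icc (s n) (s n + T), a ∉ t₁ ∪ (· + -s n) ⁻¹' t₂ := by
    by_contra! hcover
    have := calc ENNReal.ofReal T = volume (Icc (s n) (s n + T)) := by simp [Real.volume_Icc]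
      _ ≤ volume (t₁ ∪ (· + -s n) ⁻¹' t₂) := measure_mono fun a ha => hcover a ha
      _ ≤ volume t₁ + volume t₂ := by grw [measure_union_le, measure_preimage_add_right]
      _ ≤ ENNReal.ofReal (T / 4) + ENNReal.ofReal (T / 4) := add_le_add ht₁ ht₂
      _ = ENNReal.ofReal (T / 2) := by
        rw [← ENNReal.ofReal_add (by positivity) (by positivity)]; ring_nf
    rw [ENNReal.ofReal_le_ofReal_iff (by positivity)] at this
    linarith
  simp only [mem_union, mem_preimage, not_or] at hat
  have h₁ := hn₁ a ⟨⟨by linarith [(hs n).1, ha.1], by linarith [(hs n).2, ha.2]⟩, hat.1⟩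
  have h₂ := hn₂ (a + -s n) ⟨⟨by linarith [ha.1], by linarith [(hs n).2, ha.2]⟩, hat.2⟩
  have : |h (u n + s n) - h (u n)| < ε := calc
    |h (u n + s n) - h (u n)|
        = |(h (u n + a) - h (u n)) - (h (u n + s n + (a + -s n)) - h (u n + s n))| := by
          ring_nf
    _ ≤ |h (u n + a) - h (u n)| + |h (u n + s n + (a + -s n)) - h (u n + s n)| := abs_sub _ _
    _ < ε / 2 + ε / 2 := add_lt_add h₁ h₂
    _ = ε := add_halves ε
  exact (hbad n).not_gt this

theorem eventually_abs_sub_le_mul_add_one (hm : Measurable h)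
    (hh : ∀ s, Tendsto (fun u => h (u + s) - h u) atTop (𝓝 0)) {δ : ℝ} (hδ : 0 < δ) :
    ∀ᶠ u in atTop, ∀ t, 0 ≤ t → |h (u + t) - h u| ≤ δ * (t + 1) := by
  obtain ⟨U, hU⟩ := eventually_atTop.mp (eventually_forall_abs_sub_lt hm hh one_pos hδ)
  have hnat : ∀ n : ℕ, ∀ u ≥ U, |h (u + n) - h u| ≤ δ * n := by
    intro n
    induction n with
    | zero => intro u _; simp
    | succ n ih =>
      intro u hu
      calc |h (u + ↑(n + 1)) - h u|
          = |(h (u + n + 1) - h (u + n)) + (h (u + n) - h u)| := by push_cast; ring_nf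
        _ ≤ |h (u + n + 1) - h (u + n)| + |h (u + n) - h u| := abs_add_le _ _
        _ ≤ δ + δ * n := add_le_add
            (hU _ (by linarith [n.cast_nonneg (α := ℝ)]) 1 ⟨zero_le_one, le_rfl⟩).le (ih u hu)
        _ = δ * ↑(n + 1) := by push_cast; ring
  filter_upwards [eventually_ge_atTop U] with u hu t ht
  have hn : (⌊t⌋₊ : ℝ) ≤ t := Nat.floor_le ht
  have hn' : t < ⌊t⌋₊ + 1 := Nat.lt_floor_add_one t
  calc |h (u + t) - h u|
      = |(h (u + ⌊t⌋₊ + (t - ⌊t⌋₊)) - h (u + ⌊t⌋₊)) + (h (u + ⌊t⌋₊) - h u)| := by ring_nf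
    _ ≤ |h (u + ⌊t⌋₊ + (t - ⌊t⌋₊)) - h (u + ⌊t⌋₊)| + |h (u + ⌊t⌋₊) - h u| := abs_add_le _ _
    _ ≤ δ + δ * ⌊t⌋₊ := add_le_add
        (hU _ (by linarith [(⌊t⌋₊).cast_nonneg (α := ℝ)]) _ ⟨by linarith, by linarith⟩).le
        (hnat _ u hu)
    _ ≤ δ * (t + 1) := by nlinarith

end Additive

def SlowlyVaryingAtZero (L : ℝ → ℝ) : Prop :=
  ∀ t : ℝ, 0 < t → Tendsto (fun x => L (t * x) / L x) (𝓝[>] 0) (𝓝 1)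

/-- The additive form `u ↦ log L(e^{-u})` of `L`, frozen on `u < 0` so that it is continuous on
all of `ℝ` as soon as `L` is continuous and positive on `(0, 1]`. -/
noncomputable def logExpNeg (L : ℝ → ℝ) (u : ℝ) : ℝ :=
  Real.log (L (Real.exp (-max u 0)))

section Multiplicative

variable {L : ℝ → ℝ}

lemma logExpNeg_of_nonneg {u : ℝ} (hu : 0 ≤ u) : logExpNeg L u = Real.log (L (Real.exp (-u))) := by
  rw [logExpNeg, max_eq_left hu]

lemma logExpNeg_neg_log {x : ℝ} (hx : x ∈ Ioc 0 1) :
    logExpNeg L (-Real.log x) = Real.log (L x) := by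
  rw [logExpNeg_of_nonneg (neg_nonneg.mpr (log_nonpos hx.1.le hx.2)), neg_neg, exp_log hx.1]

lemma continuous_logExpNeg (hc : ContinuousOn L (Ioc 0 1)) (hpos : ∀ x ∈ Ioc 0 1, 0 < L x) :
    Continuous (logExpNeg L) := by
  have hmem : ∀ u, Real.exp (-max u 0) ∈ Ioc 0 1 := fun u =>
    ⟨exp_pos _, exp_le_one_iff.mpr (neg_nonpos.mpr (le_max_right u 0))⟩
  exact (hc.comp_continuous (by fun_prop) hmem).log fun u => (hpos _ (hmem u)).ne'

lemma SlowlyVaryingAtZero.tendsto_logExpNeg_add_sub (hL : SlowlyVaryingAtZero L)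
    (hpos : ∀ x ∈ Ioc 0 1, 0 < L x) (s : ℝ) :
    Tendsto (fun u => logExpNeg L (u + s) - logExpNeg L u) atTop (𝓝 0) := by
  have hx : Tendsto (fun u => Real.exp (-u)) atTop (𝓝[>] 0) :=
    tendsto_exp_atBot_nhdsGT.comp tendsto_neg_atTop_atBot
  have hlog := ((continuousAt_log one_ne_zero).tendsto.comp ((hL _ (exp_pos (-s))).comp hx))
  rw [log_one] at hlog
  refine hlog.congr' ?_
  filter_upwards [eventually_ge_atTop 0, eventually_ge_atTop (-s)] with u hu hus
  have hmem : ∀ v, 0 ≤ v → Real.exp (-v) ∈ Ioc 0 1 := fun v hv =>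
    ⟨exp_pos _, exp_le_one_iff.mpr (neg_nonpos.mpr hv)⟩
  rw [logExpNeg_of_nonneg hu, logExpNeg_of_nonneg (by linarith : 0 ≤ u + s), neg_add,
    exp_add, mul_comm, Function.comp_apply, Function.comp_apply,
    log_div (hpos _ (by simpa [← exp_add, add_comm] using hmem _ (by linarith : 0 ≤ u + s))).ne'
      (hpos _ (hmem u hu)).ne']

/-- Potter's bound. -/
theorem SlowlyVaryingAtZero.eventually_div_le (hL : SlowlyVaryingAtZero L)
    (hc : ContinuousOn L (Ioc 0 1)) (hpos : ∀ x ∈ Ioc 0 1, 0 < L x) {δ : ℝ} (hδ : 0 < δ) :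
    ∀ᶠ x in 𝓝[>] 0, ∀ y ∈ Ioc 0 1, L (y * x) / L x ≤ Real.exp δ * y ^ (-δ) := by
  have hu : Tendsto (fun x => -Real.log x) (𝓝[>] 0) atTop :=
    tendsto_neg_atBot_atTop.comp tendsto_log_nhdsGT_zero
  filter_upwards [hu.eventually (eventually_abs_sub_le_mul_add_one
      (continuous_logExpNeg hc hpos).measurable (hL.tendsto_logExpNeg_add_sub hpos) hδ),
    Ioc_mem_nhdsGT one_pos] with x hx hx1 y hy
  have hyx : y * x ∈ Ioc 0 1 := ⟨mul_pos hy.1 hx1.1, mul_le_one₀ hy.2 hx1.1.le hx1.2⟩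
  have hlog := (le_abs_self _).trans (hx (-Real.log y) (neg_nonneg.mpr (log_nonpos hy.1.le hy.2)))
  rw [show -Real.log x + -Real.log y = -Real.log (y * x) by
      rw [log_mul hy.1.ne' hx1.1.ne']; ring,
    logExpNeg_neg_log hyx, logExpNeg_neg_log hx1, ← log_div (hpos _ hyx).ne' (hpos _ hx1).ne']
    at hlog
  calc L (y * x) / L x = Real.exp (Real.log (L (y * x) / L x)) :=
        (exp_log (div_pos (hpos _ hyx) (hpos _ hx1))).symm
    _ ≤ Real.exp (δ * (-Real.log y + 1)) := exp_le_exp.mpr hlog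
    _ = Real.exp δ * y ^ (-δ) := by rw [rpow_def_of_pos hy.1, ← exp_add]; ring_nf

end Multiplicative

lemma integral_rpow_sub_one_sq {α : ℝ} (hα : -(1 / 2) < α) :
    ∫ y in (0 : ℝ)..1, (y ^ α - 1) ^ 2 = 1 / (2 * α + 1) - 2 / (α + 1) + 1 := by
  have hα₂ : -1 < 2 * α := by linarith
  have hα₁ : -1 < α := by linarith
  have hexpand : EqOn (fun y : ℝ => (y ^ α - 1) ^ 2)
      (fun y => y ^ (2 * α) - 2 * y ^ α + 1) (uIcc 0 1) := fun y hy => by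
    rw [uIcc_of_le zero_le_one] at hy
    simp only [mul_comm 2 α, rpow_mul hy.1, rpow_two]
    ring
  have hi₂ := intervalIntegral.intervalIntegrable_rpow' (a := 0) (b := 1) hα₂
  have hi₁ := (intervalIntegral.intervalIntegrable_rpow' (a := 0) (b := 1) hα₁).const_mul 2
  rw [intervalIntegral.integral_congr hexpand,
    intervalIntegral.integral_add (hi₂.sub hi₁) intervalIntegrable_const,
    intervalIntegral.integral_sub hi₂ hi₁, intervalIntegral.integral_const_mul,
    integral_rpow (Or.inl hα₂), integral_rpow (Or.inl hα₁)]
  simp [zero_rpow (by linarith : 2 * α + 1 ≠ 0), zero_rpow (by linarith : α + 1 ≠ 0)]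
  ring

lemma integral_sub_sq_eq_mul_integral {α : ℝ} {L g : ℝ → ℝ}
    (hg : ∀ x ∈ Ioc (0 : ℝ) 1, g x = x ^ α * L x) {ε : ℝ} (hε : ε ∈ Ioc (0 : ℝ) 1)
    (hLε : L ε ≠ 0) :
    ∫ s in (0 : ℝ)..ε, (g s - g ε) ^ 2 =
      ε ^ (2 * α + 1) * L ε ^ 2 * ∫ y in (0 : ℝ)..1, (y ^ α * (L (y * ε) / L ε) - 1) ^ 2 := by
  have hscale : ∫ s in (0 : ℝ)..ε, (g s - g ε) ^ 2 =
      ε * ∫ y in (0 : ℝ)..1, (g (y * ε) - g ε) ^ 2 := by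
    rw [intervalIntegral.integral_comp_mul_right (fun s => (g s - g ε) ^ 2) hε.1.ne', zero_mul,
      one_mul, smul_eq_mul, mul_inv_cancel_left₀ hε.1.ne']
  have hfactor : ∀ᵐ y, y ∈ Ι (0 : ℝ) 1 → (g (y * ε) - g ε) ^ 2 =
      (ε ^ α * L ε) ^ 2 * (y ^ α * (L (y * ε) / L ε) - 1) ^ 2 := ae_of_all _ fun y hy => by
    rw [uIoc_of_le zero_le_one] at hy
    rw [hg _ ⟨mul_pos hy.1 hε.1, mul_le_one₀ hy.2 hε.1.le hε.2⟩, hg _ hε,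
      mul_rpow hy.1.le hε.1.le]
    field_simp
  rw [hscale, intervalIntegral.integral_congr_ae hfactor, intervalIntegral.integral_const_mul,
    rpow_add hε.1, rpow_one, mul_comm 2 α, rpow_mul hε.1.le, rpow_two]
  ring

theorem SlowlyVaryingAtZero.tendsto_integral_rpow_mul_div_sub_one_sq {L : ℝ → ℝ}
    (hL : SlowlyVaryingAtZero L) (hc : ContinuousOn L (Ioc 0 1))
    (hpos : ∀ x ∈ Ioc 0 1, 0 < L x) {α : ℝ} (hα : -(1 / 2) < α) :
    Tendsto (fun ε => ∫ y in (0 : ℝ)..1, (y ^ α * (L (y * ε) / L ε) - 1) ^ 2) (𝓝[>] 0)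
      (𝓝 (∫ y in (0 : ℝ)..1, (y ^ α - 1) ^ 2)) := by
  obtain ⟨δ, hδ, hq⟩ : ∃ δ, 0 < δ ∧ -1 < 2 * (α - δ) :=
    ⟨(2 * α + 1) / 4, by linarith, by linarith⟩
  have hmem : ∀ᶠ ε in 𝓝[>] (0 : ℝ), ε ∈ Ioc 0 1 := Ioc_mem_nhdsGT one_pos
  have hmul : ∀ {ε y : ℝ}, ε ∈ Ioc (0 : ℝ) 1 → y ∈ Ioc (0 : ℝ) 1 → y * ε ∈ Ioc (0 : ℝ) 1 :=
    fun hε hy => ⟨mul_pos hy.1 hε.1, mul_le_one₀ hy.2 hε.1.le hε.2⟩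
  refine intervalIntegral.tendsto_integral_filter_of_dominated_convergence
    (fun y => 2 * Real.exp δ ^ 2 * y ^ (2 * (α - δ)) + 2) ?_ ?_ ?_ ?_
  · filter_upwards [hmem] with ε hε
    rw [uIoc_of_le zero_le_one]
    refine ContinuousOn.aestronglyMeasurable ?_ measurableSet_Ioc
    have hLε : ContinuousOn (fun y => L (y * ε)) (Ioc 0 1) :=
      hc.comp (continuous_mul_const ε).continuousOn fun y hy => hmul hε hy
    exact (((continuousOn_id.rpow_const fun y hy => Or.inl hy.1.ne').mul
      (hLε.div_const _)).sub continuousOn_const).pow 2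
  · filter_upwards [hmem, hL.eventually_div_le hc hpos hδ] with ε hε hpotter
    refine ae_of_all _ fun y hy => ?_
    rw [uIoc_of_le zero_le_one] at hy
    have hA : 0 ≤ y ^ α * (L (y * ε) / L ε) :=
      mul_nonneg (rpow_nonneg hy.1.le α) (div_pos (hpos _ (hmul hε hy)) (hpos _ hε)).le
    have hAB : y ^ α * (L (y * ε) / L ε) ≤ Real.exp δ * y ^ (α - δ) := by
      calc y ^ α * (L (y * ε) / L ε) ≤ y ^ α * (Real.exp δ * y ^ (-δ)) :=
            mul_le_mul_of_nonneg_left (hpotter y hy) (rpow_nonneg hy.1.le α)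
        _ = Real.exp δ * y ^ (α - δ) := by rw [sub_eq_add_neg, rpow_add hy.1]; ring
    have hB : (Real.exp δ * y ^ (α - δ)) ^ 2 = Real.exp δ ^ 2 * y ^ (2 * (α - δ)) := by
      rw [mul_pow, mul_comm 2, rpow_mul hy.1.le, rpow_two]
    rw [Real.norm_eq_abs, abs_of_nonneg (sq_nonneg _)]
    nlinarith [pow_le_pow_left₀ hA hAB 2]
  · exact ((intervalIntegral.intervalIntegrable_rpow' hq).const_mul _).add
      intervalIntegrable_const
  · refine ae_of_all _ fun y hy => ?_
    rw [uIoc_of_le zero_le_one] at hy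
    have hcont : Continuous fun r : ℝ => (y ^ α * r - 1) ^ 2 := by fun_prop
    simpa [Function.comp_def] using (hcont.tendsto 1).comp (hL y hy.1)

theorem truncated_kernel_mse (α : ℝ) (hα : α ∈ Set.Ioo (-(1/2) : ℝ) (1/2)) (hα0 : α ≠ 0)
    (Lg : ℝ → ℝ)
    (hslow : ∀ t : ℝ, 0 < t →
      Tendsto (fun x => Lg (t * x) / Lg x) (nhdsWithin 0 (Set.Ioi 0)) (nhds 1))
    (hC1 : ContDiffOn ℝ 1 Lg (Set.Ioc (0 : ℝ) 1))
    (hpos : ∃ m : ℝ, 0 < m ∧ ∀ x ∈ Set.Ioc (0 : ℝ) 1, m ≤ Lg x)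
    (g : ℝ → ℝ) (hg : ∀ x ∈ Set.Ioc (0 : ℝ) 1, g x = x ^ α * Lg x) :
    Tendsto (fun ε : ℝ =>
        (∫ s in (0 : ℝ)..ε, (g s - g ε) ^ 2) /
          ((1 / (2 * α + 1) - 2 / (α + 1) + 1) * ε ^ (2 * α + 1) * (Lg ε) ^ 2))
      (nhdsWithin 0 (Set.Ioi 0)) (nhds 1) := by
  obtain ⟨m, hm, hmle⟩ := hpos
  have hLpos : ∀ x ∈ Ioc (0 : ℝ) 1, 0 < Lg x := fun x hx => hm.trans_le (hmle x hx)
  have hJ : 0 < 1 / (2 * α + 1) - 2 / (α + 1) + 1 := by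
    have h₂ : 0 < 2 * α + 1 := by linarith [hα.1]
    have h₁ : 0 < α + 1 := by linarith [hα.1]
    rw [show 1 / (2 * α + 1) - 2 / (α + 1) + 1 = 2 * α ^ 2 / ((2 * α + 1) * (α + 1)) by
      field_simp; ring]
    exact div_pos (by positivity) (by positivity)
  have hlim := (SlowlyVaryingAtZero.tendsto_integral_rpow_mul_div_sub_one_sq hslow
    hC1.continuousOn hLpos hα.1).div_const (1 / (2 * α + 1) - 2 / (α + 1) + 1)
  rw [integral_rpow_sub_one_sq hα.1, div_self hJ.ne'] at hlim
  refine hlim.congr' ?_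
  filter_upwards [Ioc_mem_nhdsGT one_pos] with ε hε
  have hεpow : 0 < ε ^ (2 * α + 1) := rpow_pos_of_pos hε.1 _
  have hLε := hLpos ε hε
  rw [integral_sub_sq_eq_mul_integral hg hε hLε.ne']
  generalize ∫ y in (0 : ℝ)..1, (y ^ α * (Lg (y * ε) / Lg ε) - 1) ^ 2 = I
  field_simp
end

section
/- Let g : (0,∞) → [0,∞) be continuously differentiable with x ↦ |g′(x)| non-increasing on [M,∞) for some M > 1 and ∫_1^∞ g′(x)² dx < ∞. Then A′_h := ∫_{1−h}^∞ (g(x+h) − g(x))² dx satisfies A′_h = O(h²) as h → 0; specifically, limsup_{h→0} A′_h/h² ≤ (M−1) sup_{y∈[1,M]} g′(y)² + ∫_1^∞ g′(x)² dx. -/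
open Real Filter Set MeasureTheory

theorem tail_increment_bound (g : ℝ → ℝ) (M : ℝ) (hM : 1 < M)
    (hC1 : ContDiffOn ℝ 1 g (Set.Ioi (0 : ℝ)))
    (hmono : AntitoneOn (fun x => |deriv g x|) (Set.Ici M))
    (hint : IntegrableOn (fun x => (deriv g x) ^ 2) (Set.Ioi (1 : ℝ))) :
    Filter.limsup
        (fun h : ℝ => (∫ x in Set.Ioi (1 - h), (g (x + h) - g x) ^ 2) / h ^ 2)
        (nhdsWithin 0 (Set.Ioi 0)) ≤
      (M - 1) * sSup ((fun y => (deriv g y) ^ 2) '' Set.Icc (1 : ℝ) M) +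
        ∫ x in Set.Ioi (1 : ℝ), (deriv g x) ^ 2 := by
  set f : ℝ → ℝ := fun t => (deriv g t) ^ 2 with hfdef
  have hgc : ContinuousOn g (Set.Ioi 0) := hC1.continuousOn
  have hgd : ∀ x ∈ Set.Ioi (0 : ℝ), DifferentiableAt ℝ g x := fun x hx =>
    (hC1.differentiableOn one_ne_zero).differentiableAt (isOpen_Ioi.mem_nhds hx)
  have hdc : ContinuousOn (deriv g) (Set.Ioi 0) :=
    hC1.continuousOn_deriv_of_isOpen isOpen_Ioi le_rfl
  have hfc : ContinuousOn f (Set.Ioi 0) := hdc.pow 2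
  set S := sSup (f '' Set.Icc 1 M) with hSdef
  set K := sSup (f '' Set.Icc (1 / 2) (M + 1)) with hKdef
  set I := ∫ x in Set.Ioi (1 : ℝ), f x with hIdef
  have hsub1 : Set.Icc (1 : ℝ) M ⊆ Set.Ioi 0 := fun x hx => lt_of_lt_of_le one_pos hx.1
  have hsub2 : Set.Icc (1 / 2 : ℝ) (M + 1) ⊆ Set.Ioi 0 := fun x hx =>
    lt_of_lt_of_le (by norm_num) hx.1
  have hbdd1 : BddAbove (f '' Set.Icc 1 M) :=
    (isCompact_Icc.image_of_continuousOn (hfc.mono hsub1)).bddAbove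
  have hbdd2 : BddAbove (f '' Set.Icc (1 / 2) (M + 1)) :=
    (isCompact_Icc.image_of_continuousOn (hfc.mono hsub2)).bddAbove
  have hS : ∀ ξ ∈ Set.Icc (1 : ℝ) M, f ξ ≤ S := fun ξ hξ =>
    le_csSup hbdd1 (Set.mem_image_of_mem f hξ)
  have hK : ∀ ξ ∈ Set.Icc (1 / 2 : ℝ) (M + 1), f ξ ≤ K := fun ξ hξ =>
    le_csSup hbdd2 (Set.mem_image_of_mem f hξ)
  have hSnn : 0 ≤ S := le_trans (sq_nonneg _) (hS 1 ⟨le_rfl, hM.le⟩)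
  have hInn : 0 ≤ I := setIntegral_nonneg measurableSet_Ioi fun x _ => sq_nonneg _
  have hmono2 : ∀ x ξ : ℝ, M ≤ x → x ≤ ξ → f ξ ≤ f x := by
    intro x ξ hx hxξ
    have h1 : |deriv g ξ| ≤ |deriv g x| :=
      hmono (show x ∈ Set.Ici M from hx) (show ξ ∈ Set.Ici M from hx.trans hxξ) hxξ
    calc f ξ = |deriv g ξ| ^ 2 := (sq_abs _).symm
      _ ≤ |deriv g x| ^ 2 := pow_le_pow_left₀ (abs_nonneg _) h1 2
      _ = f x := sq_abs _
  -- Mean value theorem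
  have hmvt : ∀ h : ℝ, h ∈ Set.Ioo (0 : ℝ) (1 / 2) → ∀ x : ℝ, 1 - h < x →
      ∃ ξ ∈ Set.Ioo x (x + h), (g (x + h) - g x) ^ 2 = f ξ * h ^ 2 := by
    intro h hh x hx
    have hx0 : (0 : ℝ) < x := by
      have : (1 / 2 : ℝ) < 1 - h := by linarith [hh.2]
      linarith
    have hsub : Set.Icc x (x + h) ⊆ Set.Ioi 0 := fun t ht => lt_of_lt_of_le hx0 ht.1
    obtain ⟨ξ, hξ, hslope⟩ := exists_hasDerivAt_eq_slope g (deriv g)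
      (show x < x + h by linarith [hh.1]) (hgc.mono hsub)
      (fun t ht => (hgd t (hsub (Set.mem_Icc_of_Ioo ht))).hasDerivAt)
    refine ⟨ξ, hξ, ?_⟩
    have hne : h ≠ 0 := ne_of_gt hh.1
    have heq : g (x + h) - g x = deriv g ξ * h := by
      rw [hslope, show x + h - x = h from by ring]
      field_simp
    rw [heq, hfdef]
    ring
  -- key bound for each small h
  have key : ∀ h : ℝ, h ∈ Set.Ioo (0 : ℝ) (1 / 2) →
      (∫ x in Set.Ioi (1 - h), (g (x + h) - g x) ^ 2) / h ^ 2 ≤ (M - 1) * S + I + h * K := by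
    intro h hh
    obtain ⟨hh0, hh2⟩ := hh
    set Δ : ℝ → ℝ := fun x => (g (x + h) - g x) ^ 2 with hΔdef
    have hΔcont : ContinuousOn Δ (Set.Ici (1 - h)) := by
      have h1 : ∀ x ∈ Set.Ici (1 - h), x ∈ Set.Ioi (0 : ℝ) := fun x hx => by
        have : (1 : ℝ) - h > 0 := by linarith
        exact lt_of_lt_of_le this hx
      have h2 : ContinuousOn (fun x => g (x + h)) (Set.Ici (1 - h)) := by
        apply hgc.comp (Continuous.continuousOn (continuous_id.add continuous_const))
        intro x hx
        have := h1 x hx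
        simp only [Set.mem_Ioi, id_eq, Pi.add_apply] at this ⊢
        linarith
      exact ((h2.sub (hgc.mono h1)).pow 2)
    -- pointwise bounds
    have b1 : ∀ x ∈ Set.Ioc (1 - h) 1, Δ x ≤ h ^ 2 * K := by
      intro x hx
      obtain ⟨ξ, hξ, heq⟩ := hmvt h ⟨hh0, hh2⟩ x hx.1
      have hξmem : ξ ∈ Set.Icc (1 / 2 : ℝ) (M + 1) := by
        constructor
        · have := hξ.1; have := hx.1; linarith
        · have := hξ.2; have := hx.2; linarith
      rw [hΔdef]; simp only [heq]
      calc f ξ * h ^ 2 ≤ K * h ^ 2 :=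
            mul_le_mul_of_nonneg_right (hK ξ hξmem) (sq_nonneg h)
        _ = h ^ 2 * K := by ring
    have b2 : ∀ x ∈ Set.Ioc (1 : ℝ) M, Δ x ≤ h ^ 2 * S := by
      intro x hx
      obtain ⟨ξ, hξ, heq⟩ := hmvt h ⟨hh0, hh2⟩ x (by linarith [hx.1])
      have hfξ : f ξ ≤ S := by
        rcases le_or_gt ξ M with hc | hc
        · exact hS ξ ⟨by linarith [hξ.1, hx.1], hc⟩
        · exact le_trans (hmono2 M ξ le_rfl hc.le) (hS M ⟨hM.le, le_rfl⟩)
      rw [hΔdef]; simp only [heq]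
      calc f ξ * h ^ 2 ≤ S * h ^ 2 := mul_le_mul_of_nonneg_right hfξ (sq_nonneg h)
        _ = h ^ 2 * S := by ring
    have b3 : ∀ x ∈ Set.Ioi M, Δ x ≤ h ^ 2 * f x := by
      intro x hx
      obtain ⟨ξ, hξ, heq⟩ := hmvt h ⟨hh0, hh2⟩ x (by simp only [Set.mem_Ioi] at hx; linarith)
      have hfξ : f ξ ≤ f x := hmono2 x ξ (le_of_lt hx) hξ.1.le
      rw [hΔdef]; simp only [heq]
      calc f ξ * h ^ 2 ≤ f x * h ^ 2 := mul_le_mul_of_nonneg_right hfξ (sq_nonneg h)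
        _ = h ^ 2 * f x := by ring
    -- integrability
    have iΔ1 : IntegrableOn Δ (Set.Ioc (1 - h) 1) :=
      ((hΔcont.mono (Set.Icc_subset_Ici_self)).integrableOn_compact isCompact_Icc).mono_set
        Set.Ioc_subset_Icc_self
    have iΔ2 : IntegrableOn Δ (Set.Ioc (1 : ℝ) M) := by
      refine ((hΔcont.mono ?_).integrableOn_compact isCompact_Icc).mono_set
        Set.Ioc_subset_Icc_self
      exact fun x hx => le_trans (by linarith) hx.1
    have hfM : IntegrableOn f (Set.Ioi M) := hint.mono_set (Set.Ioi_subset_Ioi hM.le)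
    have ihf : IntegrableOn (fun x => h ^ 2 * f x) (Set.Ioi M) := hfM.const_mul _
    have iΔ3 : IntegrableOn Δ (Set.Ioi M) := by
      refine Integrable.mono ihf ((hΔcont.mono ?_).aestronglyMeasurable measurableSet_Ioi) ?_
      · exact fun x hx => le_trans (by linarith : 1 - h ≤ M) (le_of_lt hx)
      · refine (ae_restrict_iff' measurableSet_Ioi).2 (ae_of_all _ fun x hx => ?_)
        rw [Real.norm_eq_abs, Real.norm_eq_abs, abs_of_nonneg (sq_nonneg _),
          abs_of_nonneg (by positivity : (0:ℝ) ≤ h ^ 2 * f x)]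
        exact b3 x hx
    have iΔIoi1 : IntegrableOn Δ (Set.Ioi (1 : ℝ)) := by
      rw [← Set.Ioc_union_Ioi_eq_Ioi hM.le]
      exact iΔ2.union iΔ3
    have disj1 : Disjoint (Set.Ioc (1 - h) 1) (Set.Ioi (1 : ℝ)) :=
      Set.disjoint_left.2 fun x hx hx' => absurd hx' (not_lt.2 hx.2)
    have disj2 : Disjoint (Set.Ioc (1 : ℝ) M) (Set.Ioi M) :=
      Set.disjoint_left.2 fun x hx hx' => absurd hx' (not_lt.2 hx.2)
    have hsplit : (∫ x in Set.Ioi (1 - h), Δ x) =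
        (∫ x in Set.Ioc (1 - h) 1, Δ x) + ((∫ x in Set.Ioc (1 : ℝ) M, Δ x) +
          ∫ x in Set.Ioi M, Δ x) := by
      rw [← Set.Ioc_union_Ioi_eq_Ioi (by linarith : (1 : ℝ) - h ≤ 1),
        setIntegral_union disj1 measurableSet_Ioi iΔ1 iΔIoi1,
        ← Set.Ioc_union_Ioi_eq_Ioi hM.le,
        setIntegral_union disj2 measurableSet_Ioi iΔ2 iΔ3]
    have e1 : (∫ x in Set.Ioc (1 - h) 1, Δ x) ≤ h * (h ^ 2 * K) := by
      calc (∫ x in Set.Ioc (1 - h) 1, Δ x) ≤ ∫ _x in Set.Ioc (1 - h) 1, h ^ 2 * K :=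
            setIntegral_mono_on iΔ1
              (integrableOn_const measure_Ioc_lt_top.ne) measurableSet_Ioc b1
        _ = h * (h ^ 2 * K) := by
            rw [setIntegral_const, measureReal_def, Real.volume_Ioc, smul_eq_mul,
              ENNReal.toReal_ofReal (by linarith : (0:ℝ) ≤ 1 - (1 - h))]
            ring
    have e2 : (∫ x in Set.Ioc (1 : ℝ) M, Δ x) ≤ (M - 1) * (h ^ 2 * S) := by
      calc (∫ x in Set.Ioc (1 : ℝ) M, Δ x) ≤ ∫ _x in Set.Ioc (1 : ℝ) M, h ^ 2 * S :=
            setIntegral_mono_on iΔ2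
              (integrableOn_const measure_Ioc_lt_top.ne) measurableSet_Ioc b2
        _ = (M - 1) * (h ^ 2 * S) := by
            rw [setIntegral_const, measureReal_def, Real.volume_Ioc, smul_eq_mul,
              ENNReal.toReal_ofReal (by linarith : (0:ℝ) ≤ M - 1)]
    have e3 : (∫ x in Set.Ioi M, Δ x) ≤ h ^ 2 * I := by
      calc (∫ x in Set.Ioi M, Δ x) ≤ ∫ x in Set.Ioi M, h ^ 2 * f x :=
            setIntegral_mono_on iΔ3 ihf measurableSet_Ioi b3
        _ = h ^ 2 * ∫ x in Set.Ioi M, f x := MeasureTheory.integral_const_mul _ _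
        _ ≤ h ^ 2 * I := by
            apply mul_le_mul_of_nonneg_left _ (sq_nonneg h)
            exact setIntegral_mono_set hint (ae_of_all _ fun x => sq_nonneg _)
              ((Set.Ioi_subset_Ioi hM.le).eventuallyLE)
    have htot : (∫ x in Set.Ioi (1 - h), Δ x) ≤ ((M - 1) * S + I + h * K) * h ^ 2 := by
      rw [hsplit, show ((M - 1) * S + I + h * K) * h ^ 2 =
        h * (h ^ 2 * K) + ((M - 1) * (h ^ 2 * S) + h ^ 2 * I) by ring]
      linarith [e1, e2, e3]
    rw [div_le_iff₀ (by positivity : (0:ℝ) < h ^ 2)]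
    exact htot
  -- conclude via limsup
  set u : ℝ → ℝ := fun h => (∫ x in Set.Ioi (1 - h), (g (x + h) - g x) ^ 2) / h ^ 2 with hudef
  set v : ℝ → ℝ := fun h => (M - 1) * S + I + h * K with hvdef
  have hmem : Set.Ioo (0 : ℝ) (1 / 2) ∈ nhdsWithin (0 : ℝ) (Set.Ioi 0) :=
    Ioo_mem_nhdsGT_of_mem ⟨le_rfl, by norm_num⟩
  have hev : ∀ᶠ h in nhdsWithin (0 : ℝ) (Set.Ioi 0), u h ≤ v h :=
    Filter.eventually_of_mem hmem fun h hh => key h hh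
  have hnn : ∀ᶠ h in nhdsWithin (0 : ℝ) (Set.Ioi 0), (0 : ℝ) ≤ u h :=
    Filter.eventually_of_mem self_mem_nhdsWithin fun h _ =>
      div_nonneg (setIntegral_nonneg measurableSet_Ioi fun x _ => sq_nonneg _) (sq_nonneg h)
  have hv : Filter.Tendsto v (nhdsWithin (0 : ℝ) (Set.Ioi 0)) (nhds ((M - 1) * S + I)) := by
    have hc : Continuous v := by
      rw [hvdef]; exact continuous_const.add (continuous_id.mul continuous_const)
    have ht : Filter.Tendsto v (nhds 0) (nhds (v 0)) := hc.tendsto 0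
    have h0 : v 0 = (M - 1) * S + I := by simp [hvdef]
    rw [h0] at ht
    exact ht.mono_left nhdsWithin_le_nhds
  calc Filter.limsup u (nhdsWithin (0 : ℝ) (Set.Ioi 0))
      ≤ Filter.limsup v (nhdsWithin (0 : ℝ) (Set.Ioi 0)) := by
        refine Filter.limsup_le_limsup hev (Filter.IsBoundedUnder.isCoboundedUnder_le ⟨0, by simpa using hnn⟩) hv.isBoundedUnder_le
    _ = (M - 1) * S + I := hv.limsup_eq
end
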